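/- Let N ≥ 2 be an integer, let v₀ = (1/√N, √((N−1)/N)) ∈ ℂ² (the Hadamard-initialized amplitude vector), and let a = 1 − 2/N. Then for every φ ∈ ℝ, the one-step target probability satisfies P(φ) = |(A(φ)·v₀)₀|² = (1/N)·((a·cos φ − a − 1)² + sin² φ). -/

import Mathlib

/-!
With `e = exp (iφ)`, the first component of `A(φ) v₀` is `((N - 1) - 2(N - 1) e - e²) / (N √N)`.
Pulling out the unit factor `e` (using `e⁻¹ = cos φ - i sin φ`) leaves the number
`((N - 2) cos φ - 2(N - 1)) - i N sin φ`, so `P(φ)` is its squared modulus divided by `N³`,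
which is the claimed expression after substituting `N a = N - 2`.
-/

open Real Complex Matrix

/-- The generalized Grover iteration matrix with phase `φ` for a database of size `N`. -/
noncomputable def groverA (N : ℕ) (φ : ℝ) : Matrix (Fin 2) (Fin 2) ℂ :=
  !![Complex.exp (φ * Complex.I) * ((1 - Complex.exp (φ * Complex.I)) / (N : ℂ) - 1),
     ((Real.sqrt ((N : ℝ) - 1) : ℂ) / (N : ℂ)) * (1 - Complex.exp (φ * Complex.I));
     ((Real.sqrt ((N : ℝ) - 1) : ℂ) / (N : ℂ)) * Complex.exp (φ * Complex.I) *
       (1 - Complex.exp (φ * Complex.I)),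
     -(1 / (N : ℂ) + (1 - 1 / (N : ℂ)) * Complex.exp (φ * Complex.I))]

/-- The one-step target probability: the squared modulus of the first component of `A(φ)·v`. -/
noncomputable def targetProb (N : ℕ) (φ : ℝ) (v : Fin 2 → ℂ) : ℝ :=
  ‖(groverA N φ).mulVec v 0‖ ^ 2

theorem groverA_mulVec_apply_zero (N : ℕ) (φ : ℝ) (v : Fin 2 → ℂ) :
    (groverA N φ *ᵥ v) 0 = groverA N φ 0 0 * v 0 + groverA N φ 0 1 * v 1 := by
  simp [mulVec, dotProduct, Fin.sum_univ_two]

theorem groverA_mulVec_hadamard_zero {N : ℕ} (hN : 1 ≤ N) (φ : ℝ) :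
    (groverA N φ *ᵥ ![((1 / √N : ℝ) : ℂ), ((√(((N : ℝ) - 1) / N) : ℝ) : ℂ)]) 0 =
      exp (φ * I) * (((N - 2) * Real.cos φ - 2 * (N - 1) : ℝ) - (N * Real.sin φ : ℝ) * I) /
        (N * √N : ℝ) := by
  have hN₁ : (1 : ℝ) ≤ N := by exact_mod_cast hN
  have hsqrtN : (√N : ℂ) ≠ 0 := by exact_mod_cast (Real.sqrt_pos.2 (by linarith)).ne'
  have hN₀ : (N : ℂ) ≠ 0 := by exact_mod_cast (show N ≠ 0 by omega)
  have hsq : ((√((N : ℝ) - 1) : ℝ) : ℂ) ^ 2 = N - 1 := by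
    exact_mod_cast Real.sq_sqrt (by linarith)
  have hexp : exp (φ * I) * exp (-φ * I) = 1 := by rw [← Complex.exp_add]; simp
  rw [groverA_mulVec_apply_zero, Real.sqrt_div (by linarith)]
  simp only [groverA, of_apply, cons_val', cons_val_zero, cons_val_one, cons_val_fin_one]
  push_cast
  field_simp
  linear_combination ((1 - N) * exp (φ * I)) * Complex.cos_sub_sin_I (φ : ℂ) +
    exp (φ * I) * Complex.cos_add_sin_I (φ : ℂ) + (1 - exp (φ * I)) * hsq + (1 - N) * hexp

theorem norm_exp_mul_I_mul_div_sq (φ x y r : ℝ) :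
    ‖exp (φ * I) * ((x : ℂ) - (y : ℂ) * I) / (r : ℂ)‖ ^ 2 = (x ^ 2 + y ^ 2) / r ^ 2 := by
  rw [norm_div, norm_mul, Complex.norm_exp_ofReal_mul_I, one_mul, div_pow, Complex.norm_real,
    Real.norm_eq_abs, sq_abs, Complex.sq_norm, sub_eq_add_neg, ← neg_mul, ← ofReal_neg,
    Complex.normSq_add_mul_I, neg_sq]

theorem stmt_0 (N : ℕ) (hN : 2 ≤ N)
    (v₀ : Fin 2 → ℂ)
    (hv : v₀ = ![((1 / Real.sqrt N : ℝ) : ℂ), ((Real.sqrt (((N : ℝ) - 1) / N) : ℝ) : ℂ)])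
    (a : ℝ) (ha : a = 1 - 2 / (N : ℝ)) (φ : ℝ) :
    targetProb N φ v₀ =
      (1 / (N : ℝ)) * ((a * Real.cos φ - a - 1) ^ 2 + Real.sin φ ^ 2) := by
  have hN₀ : (0 : ℝ) < N := by exact_mod_cast (by omega : 0 < N)
  have hdenom : ((N : ℝ) * √N) ^ 2 = N ^ 3 := by
    rw [mul_pow, Real.sq_sqrt hN₀.le]; ring
  rw [targetProb, hv, groverA_mulVec_hadamard_zero (by omega), norm_exp_mul_I_mul_div_sq, hdenom,
    ha]
  field_simp
  ring
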